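/- Let K be a field of characteristic 0, F = FractionRing (MvPolynomial (Fin 2) K) the field of rational functions K(x₁, x₂), and let ∂₁, ∂₂ ∈ Der_K(F) be the K-derivations of F extending the partial derivatives ∂/∂x₁, ∂/∂x₂ of the polynomial ring. Then the K-linear span of the eight derivations ∂₁, ∂₂, x₁ • ∂₁, x₂ • ∂₂, x₁ • ∂₂, x₂ • ∂₁, x₁² • ∂₁ + x₁x₂ • ∂₂, and x₁x₂ • ∂₁ + x₂² • ∂₂ is a Lie subalgebra of Der_K(F) of dimension 8 over K that is isomorphic, as a Lie algebra over K, to sl₃(K); consequently there is an injective homomorphism of Lie algebras over K from sl₃(K) into Der_K(F). -/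

import Mathlib

/-- The `K`-linear span of the eight derivations `∂₁`, `∂₂`, `x₁ • ∂₁`, `x₂ • ∂₂`, `x₁ • ∂₂`,
`x₂ • ∂₁`, `x₁² • ∂₁ + x₁x₂ • ∂₂` and `x₁x₂ • ∂₁ + x₂² • ∂₂` inside
`Der_K(K(x₁, x₂))`. -/
noncomputable def sl3DerivationSpan (K : Type) [Field K] [CharZero K]
    (D₁ D₂ : Derivation K (FractionRing (MvPolynomial (Fin 2) K))
      (FractionRing (MvPolynomial (Fin 2) K))) :
    Submodule K (Derivation K (FractionRing (MvPolynomial (Fin 2) K))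
      (FractionRing (MvPolynomial (Fin 2) K))) :=
  let x : Fin 2 → FractionRing (MvPolynomial (Fin 2) K) := fun i =>
    algebraMap (MvPolynomial (Fin 2) K) (FractionRing (MvPolynomial (Fin 2) K))
      (MvPolynomial.X i)
  Submodule.span K {D₁, D₂, x 0 • D₁, x 1 • D₂, x 0 • D₂, x 1 • D₁,
    (x 0 ^ 2) • D₁ + (x 0 * x 1) • D₂, (x 0 * x 1) • D₁ + (x 1 ^ 2) • D₂}

/-!
A matrix `A ∈ 𝔤𝔩₃(K)` moves the points `y = (1 : x₁ : x₂)` of the projective plane infinitesimally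
by `A y`; read in the affine chart `y₀ = 1` this is the vector field whose `j`-th component is
`(A y)ⱼ - xⱼ (A y)₀`, a quadratic polynomial. Up to a global sign, which turns the
anti-homomorphism into a homomorphism, `A ↦ this field` is a Lie algebra homomorphism into
`Der_K(K(x₁, x₂))`: both sides of the bracket relation are derivations of `K(x₁, x₂)`, so it
suffices to compare them on `x₁, x₂`, where it is a Leibniz-rule computation. Evaluating the
coefficients at points of `K²` shows that the kernel consists of scalar matrices, which meet
`sl₃(K)` trivially in characteristic zero. Finally every such field is a `K`-combination of the
eight listed derivations, so the image (of dimension `8`) is their span, by counting dimensions.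
-/

open Matrix

theorem Derivation.sum_apply {R A M ι : Type*} [CommSemiring R] [CommSemiring A] [Algebra R A]
    [AddCommMonoid M] [Module A M] [Module R M] (s : Finset ι) (f : ι → Derivation R A M) (a : A) :
    (∑ i ∈ s, f i) a = ∑ i ∈ s, f i a := by
  change Derivation.coeFnAddMonoidHom (∑ i ∈ s, f i) a = _
  rw [map_sum, Finset.sum_apply]
  rfl

theorem IsLocalization.derivation_ext {R A S N : Type*} [CommRing R] [CommRing A] [CommRing S]
    [Algebra R S] [Algebra A S] [AddCommGroup N] [Module R N] [Module S N]
    (M : Submonoid A) [IsLocalization M S] {D E : Derivation R S N}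
    (h : ∀ a, D (algebraMap A S a) = E (algebraMap A S a)) : D = E := by
  ext z
  obtain ⟨⟨a, s⟩, rfl⟩ := IsLocalization.mk'_surjective M z
  have spec := IsLocalization.mk'_spec' S a s
  have hD := congrArg D spec
  have hE := congrArg E spec
  rw [Derivation.leibniz] at hD hE
  rw [← h s, ← h a, ← hD] at hE
  show D (mk' S a s) = E (mk' S a s)
  exact ((IsLocalization.map_units S s).smul_left_cancel).mp (add_right_cancel hE).symm

theorem MvPolynomial.derivation_ext_of_isLocalization {σ R S : Type*} [CommRing R] [CommRing S]
    [Algebra R S] [Algebra (MvPolynomial σ R) S] [IsScalarTower R (MvPolynomial σ R) S]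
    (M : Submonoid (MvPolynomial σ R)) [IsLocalization M S] {D E : Derivation R S S}
    (h : ∀ i, D (algebraMap (MvPolynomial σ R) S (X i)) = E (algebraMap (MvPolynomial σ R) S (X i))) :
    D = E :=
  IsLocalization.derivation_ext M fun p => DFunLike.congr_fun
    (MvPolynomial.derivation_ext (D₁ := D.compAlgebraMap (MvPolynomial σ R))
      (D₂ := E.compAlgebraMap (MvPolynomial σ R)) h) p

theorem LieAlgebra.SpecialLinear.finrank_sl {ι K : Type*} [Field K] [Fintype ι] [DecidableEq ι]
    [Nonempty ι] : Module.finrank K (sl ι K) = Fintype.card ι ^ 2 - 1 := by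
  have hsurj : Function.Surjective (traceLinearMap ι K K) := fun c =>
    ⟨Matrix.single (Classical.arbitrary ι) (Classical.arbitrary ι) c, trace_single_eq_same _ c⟩
  have := LinearMap.finrank_range_add_finrank_ker (traceLinearMap ι K K)
  rw [LinearMap.range_eq_top.mpr hsurj, finrank_top, Module.finrank_self,
    Module.finrank_matrix, Module.finrank_self] at this
  change Module.finrank K (LinearMap.ker (traceLinearMap ι K K)) = _
  rw [sq]
  omega

namespace Matrix

variable {K F ι : Type*} [CommRing K] [CommRing F] [Algebra K F] [Fintype ι]

/-- The vector field of `A` on the affine chart `{vᵢ₀ = 1}` of projective space, `v` being the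
homogeneous coordinates. -/
noncomputable def chartField (i₀ : ι) (v : ι → F) (A : Matrix ι ι K) : ι → F :=
  (A.map (algebraMap K F) *ᵥ v) i₀ • v - A.map (algebraMap K F) *ᵥ v

variable (i₀ : ι) (v : ι → F)

theorem chartField_add (A B : Matrix ι ι K) :
    chartField i₀ v (A + B) = chartField i₀ v A + chartField i₀ v B := by
  simp only [chartField, Matrix.map_add _ (map_add _), add_mulVec, Pi.add_apply, add_smul]
  abel

theorem chartField_smul (c : K) (A : Matrix ι ι K) :
    chartField i₀ v (c • A) = algebraMap K F c • chartField i₀ v A := by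
  simp only [chartField, Matrix.map_smul' _ _ _ (map_mul _), smul_mulVec, Pi.smul_apply, smul_sub,
    smul_eq_mul, mul_smul]

theorem chartField_self_of_eq_one (hv : v i₀ = 1) (A : Matrix ι ι K) :
    chartField i₀ v A i₀ = 0 := by
  simp [chartField, hv]

theorem chartField_map {G : Type*} [CommRing G] [Algebra K G] (φ : F →ₐ[K] G) (A : Matrix ι ι K)
    (k : ι) : φ (chartField i₀ v A k) = chartField i₀ (φ ∘ v) A k := by
  simp [chartField, mulVec, dotProduct, map_sum]

theorem _root_.Derivation.apply_mulVec_map (D : Derivation K F F) (A : Matrix ι ι K) (w : ι → F)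
    (k : ι) : D ((A.map (algebraMap K F) *ᵥ w) k) = (A.map (algebraMap K F) *ᵥ fun j => D (w j)) k := by
  simp [mulVec, dotProduct, Derivation.leibniz]

theorem _root_.Derivation.apply_chartField (D : Derivation K F F) (A : Matrix ι ι K) (k : ι) :
    D (chartField i₀ v A k) =
      (A.map (algebraMap K F) *ᵥ fun j => D (v j)) i₀ * v k +
        (A.map (algebraMap K F) *ᵥ v) i₀ * D (v k) - (A.map (algebraMap K F) *ᵥ fun j => D (v j)) k := by
  simp only [chartField, Pi.sub_apply, Pi.smul_apply, smul_eq_mul, Derivation.map_sub,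
    Derivation.leibniz, Derivation.apply_mulVec_map]
  ring

theorem chartField_bracket (D E : Derivation K F F) (A B : Matrix ι ι K)
    (hD : ∀ k, D (v k) = chartField i₀ v A k) (hE : ∀ k, E (v k) = chartField i₀ v B k) (k : ι) :
    D (chartField i₀ v B k) - E (chartField i₀ v A k) = chartField i₀ v (A * B - B * A) k := by
  rw [Derivation.apply_chartField, Derivation.apply_chartField, funext hD, funext hE, hD, hE]
  simp only [chartField, mulVec_sub, mulVec_smul, mulVec_mulVec, Matrix.map_sub _ (map_sub _),
    Matrix.map_mul, sub_mulVec, Pi.sub_apply, Pi.smul_apply, smul_eq_mul]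
  ring

end Matrix

theorem Matrix.eq_smul_one_of_forall_chartField_eq_zero {K : Type*} [Field K] [NeZero (2 : K)]
    {A : Matrix (Fin 3) (Fin 3) K} (h : ∀ a : Fin 2 → K, chartField 0 (vecCons 1 a) A = 0) :
    A = A 0 0 • 1 := by
  have e1 (a b : K) := congr_fun (h ![a, b]) 1
  have e2 (a b : K) := congr_fun (h ![a, b]) 2
  simp only [chartField, mulVec, dotProduct, Algebra.algebraMap_self, RingHom.coe_id, map_apply,
    id_eq, Fin.sum_univ_three, cons_val_zero, mul_one, cons_val_one, cons_val, smul_cons,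
    smul_eq_mul, smul_empty, map_id, Pi.sub_apply, Pi.zero_apply] at e1 e2
  have h10 : A 1 0 = 0 := by linear_combination -e1 0 0
  have h01 : (2 : K) * A 0 1 = 0 := by linear_combination e1 1 0 + e1 (-1) 0 - 2 * e1 0 0
  have h11 : (2 : K) * (A 1 1 - A 0 0) = 0 := by linear_combination e1 (-1) 0 - e1 1 0
  simp only [mul_eq_zero, two_ne_zero, false_or, sub_eq_zero] at h01 h11
  have h12 : A 1 2 = 0 := by linear_combination -e1 0 1 - h10
  have h02 : A 0 2 = 0 := by linear_combination e1 1 1 - e1 1 0 + h12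
  have h20 : A 2 0 = 0 := by linear_combination -e2 0 0
  have h21 : A 2 1 = 0 := by linear_combination -e2 1 0 - h20
  have h22 : A 2 2 = A 0 0 := by linear_combination -e2 0 1 + h02 - h20
  ext i j
  fin_cases i <;> fin_cases j <;> simp [h10, h01, h11, h12, h02, h20, h21, h22]

section ProjectiveVectorField

variable {K F : Type*} [CommRing K] [CommRing F] [Algebra K F] {n : ℕ}
  (x : Fin n → F) (D : Fin n → Derivation K F F)

/-- The vector field of `A` on the affine chart `(1 : x₁ : ⋯ : xₙ)`, with `D i` playing the role
of `∂/∂xᵢ`. -/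
noncomputable def projectiveVectorField (A : Matrix (Fin (n + 1)) (Fin (n + 1)) K) :
    Derivation K F F :=
  ∑ i, chartField 0 (vecCons 1 x) A i.succ • D i

theorem projectiveVectorField_add (A B : Matrix (Fin (n + 1)) (Fin (n + 1)) K) :
    projectiveVectorField x D (A + B) =
      projectiveVectorField x D A + projectiveVectorField x D B := by
  simp only [projectiveVectorField, chartField_add, Pi.add_apply, add_smul, Finset.sum_add_distrib]

theorem projectiveVectorField_smul (c : K) (A : Matrix (Fin (n + 1)) (Fin (n + 1)) K) :
    projectiveVectorField x D (c • A) = c • projectiveVectorField x D A := by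
  simp only [projectiveVectorField, chartField_smul, Pi.smul_apply, smul_eq_mul, mul_smul,
    algebraMap_smul, Finset.smul_sum]

variable {x D}

theorem projectiveVectorField_apply_cons (hD : ∀ i j, D i (x j) = if i = j then 1 else 0)
    (A : Matrix (Fin (n + 1)) (Fin (n + 1)) K) (k : Fin (n + 1)) :
    projectiveVectorField x D A (vecCons 1 x k) = chartField 0 (vecCons 1 x) A k := by
  induction k using Fin.cases with
  | zero => simpa using (chartField_self_of_eq_one 0 (vecCons 1 x) rfl A).symm
  | succ j => simp [projectiveVectorField, Derivation.sum_apply, hD]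

theorem projectiveVectorField_lie_apply (hD : ∀ i j, D i (x j) = if i = j then 1 else 0)
    (A B : Matrix (Fin (n + 1)) (Fin (n + 1)) K) (j : Fin n) :
    ⁅projectiveVectorField x D A, projectiveVectorField x D B⁆ (x j) =
      projectiveVectorField x D (A * B - B * A) (x j) := by
  have hx : x j = vecCons (1 : F) x j.succ := rfl
  rw [Derivation.commutator_apply, hx, projectiveVectorField_apply_cons hD,
    projectiveVectorField_apply_cons hD, projectiveVectorField_apply_cons hD]
  exact chartField_bracket 0 _ _ _ A B (projectiveVectorField_apply_cons hD A)
    (projectiveVectorField_apply_cons hD B) _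

end ProjectiveVectorField

theorem projectiveVectorField_fin_two {K F : Type*} [CommRing K] [CommRing F] [Algebra K F]
    (x : Fin 2 → F) (D₁ D₂ : Derivation K F F)
    (A : Matrix (Fin 3) (Fin 3) K) :
    projectiveVectorField x ![D₁, D₂] A =
      (-A 1 0) • D₁ + (-A 2 0) • D₂ + (A 0 0 - A 1 1) • (x 0 • D₁) + (A 0 0 - A 2 2) • (x 1 • D₂)
        + (-A 2 1) • (x 0 • D₂) + (-A 1 2) • (x 1 • D₁)
        + A 0 1 • ((x 0 ^ 2) • D₁ + (x 0 * x 1) • D₂)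
        + A 0 2 • ((x 0 * x 1) • D₁ + (x 1 ^ 2) • D₂) := by
  simp only [projectiveVectorField, chartField, mulVec, dotProduct, map_apply, Fin.sum_univ_three,
    cons_val_zero, mul_one, cons_val_one, cons_val, ← algebraMap_smul F, Algebra.algebraMap_self,
    RingHom.id_apply, Pi.sub_apply, Pi.smul_apply, cons_val_succ, Fin.sum_univ_two,
    Fin.succ_zero_eq_one, Fin.succ_one_eq_two, cons_val_fin_one, map_neg, map_sub,
    RingHomCompTriple.comp_apply]
  module

section FractionField

open MvPolynomial LieAlgebra.SpecialLinear

variable {K S : Type*} [CommRing K] [CommRing S] [Algebra K S] {n : ℕ}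
  [Algebra (MvPolynomial (Fin n) K) S] [IsScalarTower K (MvPolynomial (Fin n) K) S]
  [IsFractionRing (MvPolynomial (Fin n) K) S] {D : Fin n → Derivation K S S}

variable (D) in
noncomputable def projectiveVectorFieldLieHom
    (hD : ∀ i j, D i (algebraMap (MvPolynomial (Fin n) K) S (X j)) = if i = j then 1 else 0) :
    sl (Fin (n + 1)) K →ₗ⁅K⁆ Derivation K S S where
  toFun A := projectiveVectorField (fun j => algebraMap (MvPolynomial (Fin n) K) S (X j)) D A
  map_add' A B := by
    rw [AddMemClass.coe_add]
    exact projectiveVectorField_add _ _ _ _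
  map_smul' c A := by
    rw [SetLike.val_smul, RingHom.id_apply]
    exact projectiveVectorField_smul _ _ _ _
  map_lie' {A B} := by
    rw [sl_bracket]
    exact MvPolynomial.derivation_ext_of_isLocalization (nonZeroDivisors _) fun j =>
      (projectiveVectorField_lie_apply hD A B j).symm

theorem chartField_eq_zero_of_projectiveVectorField_eq_zero
    (hD : ∀ i j, D i (algebraMap (MvPolynomial (Fin n) K) S (X j)) = if i = j then 1 else 0)
    {A : Matrix (Fin (n + 1)) (Fin (n + 1)) K}
    (hA : projectiveVectorField (fun j => algebraMap (MvPolynomial (Fin n) K) S (X j)) D A = 0)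
    (a : Fin n → K) : chartField 0 (vecCons 1 a) A = 0 := by
  have hS (k) :
      chartField 0 (vecCons 1 fun j => algebraMap (MvPolynomial (Fin n) K) S (X j)) A k = 0 := by
    rw [← projectiveVectorField_apply_cons hD, hA, Derivation.zero_apply]
  have hX (k) : chartField 0 (vecCons 1 (X : Fin n → MvPolynomial (Fin n) K)) A k = 0 := by
    apply IsFractionRing.injective (MvPolynomial (Fin n) K) S
    rw [← IsScalarTower.toAlgHom_apply K, chartField_map, map_zero, ← hS k]
    congr 1
    funext k
    induction k using Fin.cases <;> simp
  funext k
  rw [Pi.zero_apply, ← map_zero (aeval (R := K) a), ← hX k, chartField_map]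
  congr 1
  funext k
  induction k using Fin.cases <;> simp

theorem projectiveVectorFieldLieHom_injective {K S : Type*} [Field K] [CharZero K] [CommRing S]
    [Algebra K S] [Algebra (MvPolynomial (Fin 2) K) S] [IsScalarTower K (MvPolynomial (Fin 2) K) S]
    [IsFractionRing (MvPolynomial (Fin 2) K) S] {D : Fin 2 → Derivation K S S}
    (hD : ∀ i j, D i (algebraMap (MvPolynomial (Fin 2) K) S (X j)) = if i = j then 1 else 0) :
    Function.Injective (projectiveVectorFieldLieHom D hD) := by
  rw [injective_iff_map_eq_zero]
  intro A hA
  have hscalar := eq_smul_one_of_forall_chartField_eq_zero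
    (chartField_eq_zero_of_projectiveVectorField_eq_zero hD hA)
  have htrace : (A : Matrix (Fin 3) (Fin 3) K).trace = 0 := A.property
  rw [hscalar, trace_smul, trace_one, Fintype.card_fin, smul_eq_mul, mul_eq_zero] at htrace
  have h00 : (A : Matrix (Fin 3) (Fin 3) K) 0 0 = 0 := htrace.resolve_right (by norm_num)
  ext1
  rw [hscalar, h00, zero_smul]
  rfl

end FractionField

section SL3

open MvPolynomial LieAlgebra.SpecialLinear

variable {K : Type} [Field K] (D₁ D₂ : Derivation K (FractionRing (MvPolynomial (Fin 2) K))
  (FractionRing (MvPolynomial (Fin 2) K)))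

noncomputable def sl3Generators : Fin 8 →
    Derivation K (FractionRing (MvPolynomial (Fin 2) K)) (FractionRing (MvPolynomial (Fin 2) K)) :=
  let x : Fin 2 → FractionRing (MvPolynomial (Fin 2) K) := fun i =>
    algebraMap (MvPolynomial (Fin 2) K) (FractionRing (MvPolynomial (Fin 2) K)) (X i)
  ![D₁, D₂, x 0 • D₁, x 1 • D₂, x 0 • D₂, x 1 • D₁,
    (x 0 ^ 2) • D₁ + (x 0 * x 1) • D₂, (x 0 * x 1) • D₁ + (x 1 ^ 2) • D₂]

theorem sl3DerivationSpan_eq_span_range [CharZero K] :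
    sl3DerivationSpan K D₁ D₂ = Submodule.span K (Set.range (sl3Generators D₁ D₂)) := by
  simp only [sl3Generators, range_cons, range_empty, Set.union_empty, Set.singleton_union]
  rfl

theorem finrank_sl3DerivationSpan_le [CharZero K] :
    Module.finrank K (sl3DerivationSpan K D₁ D₂) ≤ 8 := by
  rw [sl3DerivationSpan_eq_span_range]
  exact (finrank_range_le_card _).trans_eq (Fintype.card_fin _)

theorem projectiveVectorField_eq_sum_sl3Generators (A : Matrix (Fin 3) (Fin 3) K) :
    projectiveVectorField
      (fun j => algebraMap (MvPolynomial (Fin 2) K) (FractionRing (MvPolynomial (Fin 2) K)) (X j))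
      ![D₁, D₂] A =
    ∑ i, ![-A 1 0, -A 2 0, A 0 0 - A 1 1, A 0 0 - A 2 2, -A 2 1, -A 1 2, A 0 1, A 0 2] i •
      sl3Generators D₁ D₂ i := by
  rw [projectiveVectorField_fin_two, Fin.sum_univ_eight]
  rfl

theorem projectiveVectorField_mem_sl3DerivationSpan [CharZero K] (A : Matrix (Fin 3) (Fin 3) K) :
    projectiveVectorField
      (fun j => algebraMap (MvPolynomial (Fin 2) K) (FractionRing (MvPolynomial (Fin 2) K)) (X j))
      ![D₁, D₂] A ∈ sl3DerivationSpan K D₁ D₂ := by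
  rw [projectiveVectorField_eq_sum_sl3Generators, sl3DerivationSpan_eq_span_range]
  exact Submodule.mem_span_range_iff_exists_fun K |>.mpr ⟨_, rfl⟩

theorem range_projectiveVectorFieldLieHom [CharZero K]
    (hD : ∀ i j, ![D₁, D₂] i (algebraMap (MvPolynomial (Fin 2) K) _ (X j)) =
      if i = j then 1 else 0) :
    LinearMap.range (projectiveVectorFieldLieHom ![D₁, D₂] hD : sl (Fin 3) K →ₗ[K] _) =
      sl3DerivationSpan K D₁ D₂ := by
  have : FiniteDimensional K (sl3DerivationSpan K D₁ D₂) := by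
    rw [sl3DerivationSpan_eq_span_range]
    exact FiniteDimensional.span_of_finite K (Set.finite_range _)
  apply Submodule.eq_of_le_of_finrank_le
  · rintro _ ⟨A, rfl⟩
    exact projectiveVectorField_mem_sl3DerivationSpan D₁ D₂ A
  · rw [LinearMap.finrank_range_of_inj (projectiveVectorFieldLieHom_injective hD), finrank_sl]
    exact finrank_sl3DerivationSpan_le D₁ D₂

end SL3

/-- Let `K` be a field of characteristic `0`, `F = K(x₁, x₂)` the field of rational functions in
two variables over `K`, and `∂₁, ∂₂ ∈ Der_K(F)` the `K`-derivations of `F` extending the partial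
derivatives of the polynomial ring.  Then the `K`-linear span of the eight derivations `∂₁`,
`∂₂`, `x₁ • ∂₁`, `x₂ • ∂₂`, `x₁ • ∂₂`, `x₂ • ∂₁`, `x₁² • ∂₁ + x₁x₂ • ∂₂`, `x₁x₂ • ∂₁ + x₂² • ∂₂`
is a Lie subalgebra of `Der_K(F)` of dimension `8` over `K` isomorphic, as a Lie algebra over
`K`, to `sl₃(K)`; consequently there is an injective homomorphism of Lie algebras over `K` from
`sl₃(K)` into `Der_K(F)`. -/
theorem sl3_span_of_derivations
    (K : Type) [Field K] [CharZero K]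
    (D₁ D₂ : Derivation K (FractionRing (MvPolynomial (Fin 2) K))
      (FractionRing (MvPolynomial (Fin 2) K)))
    (h₁ : ∀ p : MvPolynomial (Fin 2) K,
      D₁ (algebraMap (MvPolynomial (Fin 2) K) (FractionRing (MvPolynomial (Fin 2) K)) p) =
        algebraMap (MvPolynomial (Fin 2) K) (FractionRing (MvPolynomial (Fin 2) K))
          (MvPolynomial.pderiv 0 p))
    (h₂ : ∀ p : MvPolynomial (Fin 2) K,
      D₂ (algebraMap (MvPolynomial (Fin 2) K) (FractionRing (MvPolynomial (Fin 2) K)) p) =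
        algebraMap (MvPolynomial (Fin 2) K) (FractionRing (MvPolynomial (Fin 2) K))
          (MvPolynomial.pderiv 1 p)) :
    (∀ a ∈ sl3DerivationSpan K D₁ D₂, ∀ b ∈ sl3DerivationSpan K D₁ D₂,
      ⁅a, b⁆ ∈ sl3DerivationSpan K D₁ D₂) ∧
    Module.finrank K (sl3DerivationSpan K D₁ D₂) = 8 ∧
    ∃ ψ : LieAlgebra.SpecialLinear.sl (Fin 3) K →ₗ⁅K⁆
        Derivation K (FractionRing (MvPolynomial (Fin 2) K))
          (FractionRing (MvPolynomial (Fin 2) K)),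
      Function.Injective ψ ∧
      Set.range (ψ : LieAlgebra.SpecialLinear.sl (Fin 3) K →
          Derivation K (FractionRing (MvPolynomial (Fin 2) K))
            (FractionRing (MvPolynomial (Fin 2) K)))
        = (sl3DerivationSpan K D₁ D₂ : Set (Derivation K (FractionRing (MvPolynomial (Fin 2) K))
            (FractionRing (MvPolynomial (Fin 2) K)))) := by
  have hD : ∀ i j, ![D₁, D₂] i (algebraMap (MvPolynomial (Fin 2) K) _ (MvPolynomial.X j)) =
      if i = j then 1 else 0 := by
    intro i j
    fin_cases i <;> fin_cases j <;> simp [h₁, h₂, MvPolynomial.pderiv_X]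
  set ψ := projectiveVectorFieldLieHom ![D₁, D₂] hD
  have hinj : Function.Injective ψ := projectiveVectorFieldLieHom_injective hD
  have hrange := range_projectiveVectorFieldLieHom D₁ D₂ hD
  refine ⟨?_, ?_, ψ, hinj, congrArg SetLike.coe hrange⟩
  · rw [← hrange]
    rintro _ ⟨A, rfl⟩ _ ⟨B, rfl⟩
    exact ⟨⁅A, B⁆, ψ.map_lie A B⟩
  · rw [← hrange, LinearMap.finrank_range_of_inj hinj, LieAlgebra.SpecialLinear.finrank_sl]
    rfl
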